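/- Let E be a real inner product space, let F : E → ℝ be differentiable with L-Lipschitz gradient (L ≥ 0), let θ ∈ E and ρ ≥ 0. Then | sup_{‖ε‖ ≤ ρ} ( F(θ + ε) − F(θ) ) − ρ‖∇F(θ)‖ | ≤ L ρ² / 2. -/

import Mathlib

open InnerProductSpace

open intervalIntegral in
lemma stmt_15_key {V : Type*} [NormedAddCommGroup V] [InnerProductSpace ℝ V]
    [CompleteSpace V]
    (F : V → ℝ) (hF : Differentiable ℝ F) (L : ℝ) (hL : 0 ≤ L)
    (hLip : ∀ x y : V, ‖gradient F x - gradient F y‖ ≤ L * ‖x - y‖)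
    (x ε : V) :
    |F (x + ε) - F x - ⟪gradient F x, ε⟫_ℝ| ≤ L / 2 * ‖ε‖ ^ 2 := by
  have hgradcont : Continuous (gradient F) := by
    refine (LipschitzWith.of_dist_le_mul (K := ⟨L, hL⟩) ?_).continuous
    intro a b
    rw [dist_eq_norm, dist_eq_norm]
    exact hLip a b
  have hline : ∀ t : ℝ, HasDerivAt (fun t : ℝ => x + t • ε) ε t := by
    intro t
    simpa using ((hasDerivAt_id t).smul_const ε).const_add x
  have hg : ∀ t : ℝ, HasDerivAt (fun t : ℝ => F (x + t • ε))
      ⟪gradient F (x + t • ε), ε⟫_ℝ t := by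
    intro t
    have h1 : HasFDerivAt F
        (InnerProductSpace.toDual ℝ V (gradient F (x + t • ε))) (x + t • ε) :=
      (hF (x + t • ε)).hasGradientAt.hasFDerivAt
    exact h1.comp_hasDerivAt t (hline t)
  have hcont : Continuous fun t : ℝ => ⟪gradient F (x + t • ε), ε⟫_ℝ := by
    exact (hgradcont.comp (by continuity)).inner continuous_const
  have hint : ∫ t in (0:ℝ)..1, ⟪gradient F (x + t • ε), ε⟫_ℝ = F (x + ε) - F x := by
    have := intervalIntegral.integral_eq_sub_of_hasDerivAt
      (f := fun t : ℝ => F (x + t • ε)) (fun t _ => hg t)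
      (hcont.intervalIntegrable 0 1)
    simpa using this
  have hconst : ∫ t in (0:ℝ)..1, ⟪gradient F x, ε⟫_ℝ = ⟪gradient F x, ε⟫_ℝ := by
    simp
  have hdiff : F (x + ε) - F x - ⟪gradient F x, ε⟫_ℝ
      = ∫ t in (0:ℝ)..1, (⟪gradient F (x + t • ε), ε⟫_ℝ - ⟪gradient F x, ε⟫_ℝ) := by
    rw [intervalIntegral.integral_sub (hcont.intervalIntegrable 0 1)
      (intervalIntegrable_const), hint, hconst]
  rw [hdiff]
  have hbound : ∀ t ∈ Set.Icc (0:ℝ) 1,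
      ‖⟪gradient F (x + t • ε), ε⟫_ℝ - ⟪gradient F x, ε⟫_ℝ‖ ≤ L * t * ‖ε‖ ^ 2 := by
    intro t ht
    rw [← inner_sub_left]
    calc ‖⟪gradient F (x + t • ε) - gradient F x, ε⟫_ℝ‖
        ≤ ‖gradient F (x + t • ε) - gradient F x‖ * ‖ε‖ := norm_inner_le_norm _ _
      _ ≤ (L * ‖(x + t • ε) - x‖) * ‖ε‖ := by
          gcongr; exact hLip _ _
      _ = L * t * ‖ε‖ ^ 2 := by
          rw [add_sub_cancel_left, norm_smul, Real.norm_eq_abs, abs_of_nonneg ht.1]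
          ring
  have h2 : ‖∫ t in (0:ℝ)..1, (⟪gradient F (x + t • ε), ε⟫_ℝ - ⟪gradient F x, ε⟫_ℝ)‖
      ≤ L / 2 * ‖ε‖ ^ 2 := by
    have := intervalIntegral.norm_integral_le_abs_of_norm_le
      (g := fun t : ℝ => L * t * ‖ε‖ ^ 2)
      (f := fun t : ℝ => ⟪gradient F (x + t • ε), ε⟫_ℝ - ⟪gradient F x, ε⟫_ℝ)
      (a := 0) (b := 1) (μ := MeasureTheory.volume)
      (by
        filter_upwards [MeasureTheory.ae_restrict_mem measurableSet_uIoc] with t ht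
        rw [Set.uIoc_of_le (by norm_num : (0:ℝ) ≤ 1)] at ht
        exact hbound t ⟨ht.1.le, ht.2⟩)
      (by apply Continuous.intervalIntegrable; continuity)
    refine this.trans (le_of_eq ?_)
    have heq : ∫ t in (0:ℝ)..1, L * t * ‖ε‖ ^ 2 = (L * ‖ε‖ ^ 2) * ∫ t in (0:ℝ)..1, t := by
      rw [← intervalIntegral.integral_const_mul]
      congr 1; ext t; ring
    rw [heq, integral_id, abs_of_nonneg (by positivity)]
    ring
  simpa using h2

/-- First-order approximation of the SAM inner maximization: if `F` is differentiable with
`L`-Lipschitz gradient, then the worst-case increase of `F` over the closed ball of radius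
`ρ` differs from `ρ ‖∇F(θ)‖` by at most `L ρ² / 2`. -/
theorem stmt_15 {V : Type*} [NormedAddCommGroup V] [InnerProductSpace ℝ V]
    [CompleteSpace V]
    (F : V → ℝ) (hF : Differentiable ℝ F) (L : ℝ) (hL : 0 ≤ L)
    (hLip : ∀ x y : V, ‖gradient F x - gradient F y‖ ≤ L * ‖x - y‖)
    (θ : V) (ρ : ℝ) (hρ : 0 ≤ ρ) :
    |sSup ((fun ε : V => F (θ + ε) - F θ) '' Metric.closedBall (0 : V) ρ)
        - ρ * ‖gradient F θ‖| ≤ L * ρ ^ 2 / 2 := by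
  set S := (fun ε : V => F (θ + ε) - F θ) '' Metric.closedBall (0 : V) ρ with hS
  have key := stmt_15_key F hF L hL hLip θ
  -- upper bound for each element
  have hub : ∀ y ∈ S, y ≤ ρ * ‖(gradient F θ)‖ + L * ρ ^ 2 / 2 := by
    rintro y ⟨ε, hε, rfl⟩
    dsimp only
    rw [Metric.mem_closedBall, dist_zero_right] at hε
    have h1 := (abs_le.mp (key ε)).2
    have h2 : ⟪(gradient F θ), ε⟫_ℝ ≤ ρ * ‖(gradient F θ)‖ := by
      calc ⟪(gradient F θ), ε⟫_ℝ ≤ ‖(gradient F θ)‖ * ‖ε‖ := real_inner_le_norm (gradient F θ) ε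
        _ ≤ ‖(gradient F θ)‖ * ρ := by gcongr
        _ = ρ * ‖(gradient F θ)‖ := mul_comm _ _
    nlinarith [mul_le_mul_of_nonneg_left (mul_self_le_mul_self (norm_nonneg ε) hε) hL]
  have hne : S.Nonempty := ⟨F (θ + 0) - F θ, 0, by simpa using hρ, rfl⟩
  have hbdd : BddAbove S := ⟨ρ * ‖(gradient F θ)‖ + L * ρ ^ 2 / 2, hub⟩
  have hsup_le : sSup S ≤ ρ * ‖(gradient F θ)‖ + L * ρ ^ 2 / 2 := csSup_le hne hub
  -- lower bound via witness
  have hle_sup : ρ * ‖(gradient F θ)‖ - L * ρ ^ 2 / 2 ≤ sSup S := by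
    by_cases hg0 : (gradient F θ) = 0
    · have h0 : (0 : ℝ) ∈ S := ⟨0, by simpa using hρ, by simp⟩
      have := le_csSup hbdd h0
      simp only [hg0, norm_zero, mul_zero]
      nlinarith [sq_nonneg ρ]
    · set ε₀ := (ρ / ‖(gradient F θ)‖) • (gradient F θ) with hε₀
      have hgn : (0:ℝ) < ‖(gradient F θ)‖ := norm_pos_iff.mpr hg0
      have hnorm : ‖ε₀‖ = ρ := by
        rw [hε₀, norm_smul, Real.norm_eq_abs, abs_of_nonneg (by positivity)]
        field_simp
      have hmem : ε₀ ∈ Metric.closedBall (0 : V) ρ := by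
        rw [Metric.mem_closedBall, dist_zero_right, hnorm]
      have hinner : ⟪(gradient F θ), ε₀⟫_ℝ = ρ * ‖(gradient F θ)‖ := by
        rw [hε₀, real_inner_smul_right, real_inner_self_eq_norm_sq]
        field_simp
      have hval : ρ * ‖(gradient F θ)‖ - L * ρ ^ 2 / 2 ≤ F (θ + ε₀) - F θ := by
        have h1 := (abs_le.mp (key ε₀)).1
        rw [hinner, hnorm] at h1
        linarith
      exact hval.trans (le_csSup hbdd ⟨ε₀, hmem, rfl⟩)
  rw [abs_le]
  constructor <;> linarith
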